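/- arXiv:1712.04716 — 2 statements merged into one kernel-verified Lean document; each statement's English description precedes it below -/
import Mathlib

section
/- Let H, F : [0, L] → ℂ^{k×k} with F smooth and symmetric real, and suppose H solves the matrix Riccati equation Ḣ(t) + H(t)² = F(t), H(0) = iI, with H(t) complex symmetric for all t. If Im H(0) = I is positive definite, then Im H(t) is positive definite for all t ∈ [0, L]. -/
open Matrix Finset

theorem hasDerivAt_det' {k : ℕ} (M : ℝ → Matrix (Fin k) (Fin k) ℝ)
    (M' : Matrix (Fin k) (Fin k) ℝ) (t : ℝ)
    (h : ∀ i j, HasDerivAt (fun s => M s i j) (M' i j) t) :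
    HasDerivAt (fun s => (M s).det) ((adjugate (M t) * M').trace) t := by
  have key : HasDerivAt (fun s => (M s).det)
      (∑ σ : Equiv.Perm (Fin k), (Equiv.Perm.sign σ : ℤ) *
        ∑ i, (∏ j ∈ univ.erase i, M t (σ j) j) • M' (σ i) i) t := by
    simp only [det_apply']
    exact HasDerivAt.fun_sum fun σ _ =>
      (HasDerivAt.fun_finsetProd (fun i _ => h (σ i) i)).const_mul _
  convert key using 1
  have step1 : ∀ i : Fin k, ((M t).updateCol i (fun r => M' r i)).det
      = ∑ σ : Equiv.Perm (Fin k), (Equiv.Perm.sign σ : ℤ) *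
          ((∏ j ∈ univ.erase i, M t (σ j) j) * M' (σ i) i) := by
    intro i
    rw [det_apply']
    refine Finset.sum_congr rfl fun σ _ => ?_
    congr 1
    rw [← Finset.mul_prod_erase univ _ (Finset.mem_univ i)]
    rw [updateCol_apply, if_pos rfl, mul_comm]
    congr 1
    refine Finset.prod_congr rfl fun j hj => ?_
    rw [updateCol_apply, if_neg (Finset.ne_of_mem_erase hj)]
  have step2 : ((M t).adjugate * M').trace
      = ∑ i, ((M t).updateCol i (fun r => M' r i)).det := by
    rw [Matrix.trace]
    refine Finset.sum_congr rfl fun i _ => ?_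
    have := congrFun (cramer_eq_adjugate_mulVec (M t) (fun r => M' r i)) i
    rw [cramer_apply] at this
    rw [this]
    simp [Matrix.diag, Matrix.mul_apply, Matrix.mulVec, dotProduct]
  rw [step2]
  simp only [step1, smul_eq_mul]
  rw [Finset.sum_comm]
  refine Finset.sum_congr rfl fun σ _ => ?_
  rw [Finset.mul_sum]

-- quantitative positive-definiteness lower bound on the unit sphere
theorem posdef_lb {k : ℕ} (M : Matrix (Fin k) (Fin k) ℝ) (hM : M.PosDef) (hk : 0 < k) :
    ∃ c > 0, ∀ x : Fin k → ℝ, ‖x‖ = 1 → c ≤ x ⬝ᵥ M *ᵥ x := by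
  have hcont : Continuous fun x : Fin k → ℝ => x ⬝ᵥ M *ᵥ x := by
    simp only [dotProduct, Matrix.mulVec, dotProduct]
    fun_prop
  have hcomp : IsCompact (Metric.sphere (0 : Fin k → ℝ) 1) := isCompact_sphere 0 1
  have hne : (Metric.sphere (0 : Fin k → ℝ) 1).Nonempty := by
    haveI : Nonempty (Fin k) := ⟨⟨0, hk⟩⟩
    refine ⟨fun _ => 1, ?_⟩
    simp [pi_norm_const]
  obtain ⟨x₀, hx₀mem, hx₀min⟩ := hcomp.exists_isMinOn hne hcont.continuousOn
  refine ⟨x₀ ⬝ᵥ M *ᵥ x₀, ?_, ?_⟩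
  · have h2 := (posDef_iff_dotProduct_mulVec.mp hM).2 (x := x₀)
    rw [star_trivial] at h2
    apply h2
    intro h0
    simp [h0] at hx₀mem
  · intro x hx
    exact hx₀min (by simpa [Metric.mem_sphere, dist_zero_right] using hx)

theorem stmt13 (k : ℕ) (L : ℝ) (hL : 0 < L)
    (H : ℝ → Matrix (Fin k) (Fin k) ℂ)
    (F : ℝ → Matrix (Fin k) (Fin k) ℝ)
    (hFsmooth : ∀ i j, ContDiff ℝ (⊤ : ℕ∞) (fun t => F t i j))
    (hFsymm : ∀ t, (F t)ᵀ = F t)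
    (hHsymm : ∀ t, (H t)ᵀ = H t)
    (hODE : ∀ t ∈ Set.Icc (0 : ℝ) L, ∀ i j,
      HasDerivAt (fun s => H s i j) (((F t).map (fun x => (x : ℂ)) - H t ^ 2) i j) t)
    (hH0 : H 0 = Complex.I • (1 : Matrix (Fin k) (Fin k) ℂ))
    (hIm0 : ((H 0).map Complex.im).PosDef) :
    ∀ t ∈ Set.Icc (0 : ℝ) L, ((H t).map Complex.im).PosDef := by
  rcases Nat.eq_zero_or_pos k with hk | hk
  · subst hk
    intro t ht
    refine ⟨?_, ?_⟩
    · ext i j; exact absurd i.2 (by omega)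
    · intro x hx
      exact absurd (Finsupp.ext fun i => absurd i.2 (by omega)) hx
  set A : ℝ → Matrix (Fin k) (Fin k) ℝ := fun t => (H t).map Complex.re with hA
  set B : ℝ → Matrix (Fin k) (Fin k) ℝ := fun t => (H t).map Complex.im with hB
  -- symmetry of B
  have hBsymm : ∀ t, (B t)ᵀ = B t := by
    intro t; ext i j
    exact congrArg Complex.im (congrFun (congrFun (hHsymm t) i) j)
  have hBherm : ∀ t, (B t).IsHermitian := by
    intro t
    rw [Matrix.IsHermitian, conjTranspose]
    convert hBsymm t using 1
    ext i j
    simp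
  -- initial value
  have hB0 : B 0 = 1 := by
    ext i j
    simp only [hB, map_apply, hH0, Matrix.smul_apply, Matrix.one_apply, smul_eq_mul]
    by_cases h : i = j <;> simp [h]
  -- entrywise derivative of B
  have hBderiv : ∀ t ∈ Set.Icc (0:ℝ) L, ∀ i j,
      HasDerivAt (fun s => B s i j) ((-(A t * B t + B t * A t)) i j) t := by
    intro t ht i j
    have h1 := Complex.imCLM.hasFDerivAt.comp_hasDerivAt t (hODE t ht i j)
    convert h1 using 1
    show (-(A t * B t + B t * A t)) i j = (((F t).map (fun x => (x:ℂ)) - H t ^ 2) i j).im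
    simp only [Matrix.sub_apply, Matrix.map_apply, Complex.sub_im, Complex.ofReal_im,
      pow_two, Matrix.mul_apply, Matrix.neg_apply, Matrix.add_apply, hA, hB]
    rw [Complex.im_sum]
    simp only [Complex.mul_im, Finset.sum_add_distrib]
    ring
    all_goals rfl
  -- continuity of entries of A and B at points of Icc
  have hAcont : ∀ t ∈ Set.Icc (0:ℝ) L, ∀ i j, ContinuousAt (fun s => A s i j) t := by
    intro t ht i j
    exact Complex.continuous_re.continuousAt.comp (hODE t ht i j).continuousAt
  have hBcont : ∀ t ∈ Set.Icc (0:ℝ) L, ∀ i j, ContinuousAt (fun s => B s i j) t := by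
    intro t ht i j
    exact Complex.continuous_im.continuousAt.comp (hODE t ht i j).continuousAt
  -- derivative of det B
  have hdet : ∀ t ∈ Set.Icc (0:ℝ) L,
      HasDerivAt (fun s => (B s).det) (-(2 * (A t).trace) * (B t).det) t := by
    intro t ht
    have := hasDerivAt_det' B (-(A t * B t + B t * A t)) t (hBderiv t ht)
    convert this using 1
    rw [Matrix.mul_neg, Matrix.mul_add, trace_neg, trace_add, ← Matrix.mul_assoc,
      trace_mul_comm ((B t).adjugate * A t) (B t), ← Matrix.mul_assoc,
      Matrix.mul_adjugate, ← Matrix.mul_assoc, Matrix.adjugate_mul]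
    simp [Matrix.smul_mul, trace_smul]
    ring
  -- det B never vanishes on Icc
  have hdetcont : ∀ t ∈ Set.Icc (0:ℝ) L, ContinuousAt (fun s => (B s).det) t :=
    fun t ht => (hdet t ht).continuousAt
  have hdetB0 : (B 0).det = 1 := by rw [hB0, det_one]
  have hdetne : ∀ t ∈ Set.Icc (0:ℝ) L, (B t).det ≠ 0 := by
    by_contra hcon
    push_neg at hcon
    obtain ⟨t₁, ht₁, hdet0⟩ := hcon
    obtain ⟨K, hK⟩ : ∃ K, ∀ t ∈ Set.Icc (0:ℝ) L, |2 * (A t).trace| ≤ K := by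
      have hc : ContinuousOn (fun t => 2 * (A t).trace) (Set.Icc (0:ℝ) L) := by
        refine ContinuousOn.mul continuousOn_const ?_
        have : (fun t => (A t).trace) = fun t => ∑ i, A t i i := by
          funext t; rw [Matrix.trace]; rfl
        rw [this]
        exact continuousOn_finset_sum _ fun i _ t ht => (hAcont t ht i i).continuousWithinAt
      obtain ⟨K, hK⟩ := isCompact_Icc.exists_bound_of_continuousOn hc
      exact ⟨K, fun t ht => by have := hK t ht; rwa [Real.norm_eq_abs] at this⟩
    set Z := {t | t ∈ Set.Icc (0:ℝ) L ∧ (B t).det = 0} with hZ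
    have hZne : Z.Nonempty := ⟨t₁, ht₁, hdet0⟩
    have hZbdd : BddBelow Z := ⟨0, fun t ht => ht.1.1⟩
    set c := sInf Z with hcdef
    have hc0 : 0 ≤ c := le_csInf hZne fun t ht => ht.1.1
    have hcL : c ≤ L := le_trans (csInf_le hZbdd ⟨ht₁, hdet0⟩) ht₁.2
    have hcmem : c ∈ Set.Icc (0:ℝ) L := ⟨hc0, hcL⟩
    have hdetc : (B c).det = 0 := by
      obtain ⟨u, hu, hulim⟩ := mem_closure_iff_seq_limit.mp (csInf_mem_closure hZne hZbdd)
      have h1 : Filter.Tendsto (fun n => (B (u n)).det) Filter.atTop (nhds ((B c).det)) :=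
        (hdetcont c hcmem).tendsto.comp hulim
      have h2 : (fun n => (B (u n)).det) = fun _ => (0:ℝ) := funext fun n => (hu n).2
      rw [h2] at h1
      exact tendsto_nhds_unique h1 tendsto_const_nhds
    have hcpos : 0 < c := by
      rcases eq_or_lt_of_le hc0 with h0 | h0
      · exfalso; rw [← h0, hdetB0] at hdetc; exact one_ne_zero hdetc
      · exact h0
    -- Gronwall backwards from c
    set g : ℝ → ℝ := fun s => (B (c - s)).det with hg
    have hmem' : ∀ s ∈ Set.Icc (0:ℝ) c, c - s ∈ Set.Icc (0:ℝ) L :=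
      fun s hs => ⟨by linarith [hs.2], by linarith [hs.1]⟩
    have hgc : ContinuousOn g (Set.Icc 0 c) := fun s hs =>
      ((hdetcont _ (hmem' s hs)).comp ((continuous_const.sub continuous_id).continuousAt)).continuousWithinAt
    have hg' : ∀ s ∈ Set.Ico (0:ℝ) c, HasDerivWithinAt g
        ((-(2 * (A (c - s)).trace) * (B (c - s)).det) * (-1)) (Set.Ici s) s := by
      intro s hs
      have hsub : HasDerivAt (fun s : ℝ => c - s) (-1) s := (hasDerivAt_id s).const_sub c
      exact ((hdet (c - s) (hmem' s ⟨hs.1, hs.2.le⟩)).comp s hsub).hasDerivWithinAt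
    have hbound : ∀ s ∈ Set.Ico (0:ℝ) c,
        ‖(-(2 * (A (c - s)).trace) * (B (c - s)).det) * (-1)‖ ≤ K * ‖g s‖ + 0 := by
      intro s hs
      have h1 := hK (c - s) (hmem' s ⟨hs.1, hs.2.le⟩)
      have heq : -(2 * (A (c - s)).trace) * (B (c - s)).det * (-1)
          = (2 * (A (c - s)).trace) * (B (c - s)).det := by ring
      rw [Real.norm_eq_abs, Real.norm_eq_abs, heq, abs_mul, add_zero]
      exact mul_le_mul_of_nonneg_right h1 (abs_nonneg _)
    have ha : ‖g 0‖ ≤ 0 := by simp [hg, hdetc]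
    have := norm_le_gronwallBound_of_norm_deriv_right_le hgc hg' ha hbound c
      ⟨hcpos.le, le_refl c⟩
    rw [gronwallBound_ε0_δ0] at this
    simp only [hg, sub_self, hdetB0] at this
    rw [Real.norm_eq_abs] at this
    norm_num at this
  -- main positivity argument
  by_contra hcon
  push_neg at hcon
  obtain ⟨t₁, ht₁, hnpd⟩ := hcon
  set T := {t | t ∈ Set.Icc (0:ℝ) L ∧ ¬ (B t).PosDef} with hT
  have hTne : T.Nonempty := ⟨t₁, ht₁, hnpd⟩
  have hTbdd : BddBelow T := ⟨0, fun t ht => ht.1.1⟩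
  set c := sInf T with hcdef
  have hc0 : 0 ≤ c := le_csInf hTne fun t ht => ht.1.1
  have hcL : c ≤ L := le_trans (csInf_le hTbdd ⟨ht₁, hnpd⟩) ht₁.2
  have hcmem : c ∈ Set.Icc (0:ℝ) L := ⟨hc0, hcL⟩
  have hbefore : ∀ t ∈ Set.Icc (0:ℝ) L, t < c → (B t).PosDef := by
    intro t ht hlt
    by_contra hn
    exact absurd (csInf_le hTbdd ⟨ht, hn⟩) (not_le.mpr hlt)
  have hpd1 : (1 : Matrix (Fin k) (Fin k) ℝ).PosDef := by
    rw [← hB0]; exact hIm0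
  have hqcont : ∀ (x : Fin k → ℝ) t, t ∈ Set.Icc (0:ℝ) L →
      ContinuousAt (fun s => x ⬝ᵥ (B s) *ᵥ x) t := by
    intro x t ht
    simp only [dotProduct, Matrix.mulVec, dotProduct]
    exact tendsto_finset_sum _ fun i _ => (continuousAt_const.mul
      (tendsto_finset_sum _ fun j _ => (hBcont t ht i j).mul continuousAt_const))
  have hpsd : (B c).PosSemidef := by
    rcases eq_or_lt_of_le hc0 with h0 | h0
    · rw [← h0, hB0]; exact hpd1.posSemidef
    · refine PosSemidef.of_dotProduct_mulVec_nonneg (hBherm c) fun x => ?_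
      have hev : ∀ᶠ t in nhdsWithin c (Set.Iio c), 0 ≤ x ⬝ᵥ B t *ᵥ x := by
        filter_upwards [Ioo_mem_nhdsLT_of_mem (⟨h0, le_refl c⟩ : c ∈ Set.Ioc 0 c)]
        intro t ht
        rcases eq_or_ne x 0 with rfl | hx
        · simp
        · exact le_of_lt (by
            have := (hbefore t ⟨ht.1.le, le_trans ht.2.le hcL⟩ ht.2).dotProduct_mulVec_pos hx
            simpa using this)
      have htd : Filter.Tendsto (fun t => x ⬝ᵥ B t *ᵥ x) (nhdsWithin c (Set.Iio c))
          (nhds (x ⬝ᵥ B c *ᵥ x)) :=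
        ((hqcont x c hcmem).continuousWithinAt).tendsto
      simpa using ge_of_tendsto htd hev
  have hpd : (B c).PosDef := by
    refine PosDef.of_dotProduct_mulVec_pos hpsd.1 fun x hx => ?_
    rcases lt_or_eq_of_le (hpsd.dotProduct_mulVec_nonneg x) with h | h
    · simpa using h
    · exfalso
      have h0 : (B c) *ᵥ x = 0 := (hpsd.dotProduct_mulVec_zero_iff x).mp h.symm
      exact hdetne c hcmem ((Matrix.exists_mulVec_eq_zero_iff).mp ⟨x, hx, h0⟩)
  obtain ⟨m, hmpos, hm⟩ := posdef_lb (B c) hpd hk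
  set ε := m / (k * k + 1) with hε
  have hεpos : 0 < ε := by positivity
  have hev : ∀ᶠ t in nhds c, ∀ i j, |B t i j - B c i j| < ε := by
    rw [Filter.eventually_all]
    intro i
    rw [Filter.eventually_all]
    intro j
    have := Metric.tendsto_nhds.mp (hBcont c hcmem i j) ε hεpos
    filter_upwards [this] with t ht
    rwa [Real.dist_eq] at ht
  obtain ⟨δ, hδpos, hδ⟩ := Metric.eventually_nhds_iff.mp hev
  obtain ⟨s, hsT, hslt⟩ := exists_lt_of_csInf_lt hTne (lt_add_of_pos_right c hδpos)
  have hsc : c ≤ s := csInf_le hTbdd hsT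
  have hdist : dist s c < δ := by
    rw [Real.dist_eq, abs_of_nonneg (by linarith)]
    linarith
  have hclose := hδ hdist
  apply hsT.2
  refine PosDef.of_dotProduct_mulVec_pos (hBherm s) fun x hx => ?_
  -- reduce to the unit sphere
  have hxnorm : (0:ℝ) < ‖x‖ := norm_pos_iff.mpr hx
  set u : Fin k → ℝ := ‖x‖⁻¹ • x with hu
  have hunorm : ‖u‖ = 1 := by
    rw [hu, norm_smul, norm_inv, norm_norm, inv_mul_cancel₀ (ne_of_gt hxnorm)]
  have hui : ∀ i, |u i| ≤ 1 := by
    intro i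
    calc |u i| = ‖u i‖ := (Real.norm_eq_abs _).symm
    _ ≤ ‖u‖ := norm_le_pi_norm u i
    _ = 1 := hunorm
  have hx_eq : x = ‖x‖ • u := by
    rw [hu, smul_smul, mul_inv_cancel₀ (ne_of_gt hxnorm), one_smul]
  have hqu : 0 < u ⬝ᵥ B s *ᵥ u := by
    have hsplit : u ⬝ᵥ B s *ᵥ u = u ⬝ᵥ B c *ᵥ u + u ⬝ᵥ (B s - B c) *ᵥ u := by
      rw [Matrix.sub_mulVec, dotProduct_sub]; ring
    have hbound : |u ⬝ᵥ (B s - B c) *ᵥ u| < m := by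
      have h1 : |u ⬝ᵥ (B s - B c) *ᵥ u| ≤ ∑ i, ∑ j, |B s i j - B c i j| := by
        simp only [dotProduct, Matrix.mulVec, dotProduct, Matrix.sub_apply]
        calc |∑ i, u i * ∑ j, (B s i j - B c i j) * u j|
            ≤ ∑ i, |u i * ∑ j, (B s i j - B c i j) * u j| := Finset.abs_sum_le_sum_abs _ _
          _ ≤ ∑ i, ∑ j, |B s i j - B c i j| := by
              refine Finset.sum_le_sum fun i _ => ?_
              rw [abs_mul]
              calc |u i| * |∑ j, (B s i j - B c i j) * u j|
                  ≤ 1 * |∑ j, (B s i j - B c i j) * u j| :=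
                    mul_le_mul_of_nonneg_right (hui i) (abs_nonneg _)
                _ = |∑ j, (B s i j - B c i j) * u j| := one_mul _
                _ ≤ ∑ j, |(B s i j - B c i j) * u j| := Finset.abs_sum_le_sum_abs _ _
                _ ≤ ∑ j, |B s i j - B c i j| := by
                    refine Finset.sum_le_sum fun j _ => ?_
                    rw [abs_mul]
                    calc |B s i j - B c i j| * |u j| ≤ |B s i j - B c i j| * 1 :=
                          mul_le_mul_of_nonneg_left (hui j) (abs_nonneg _)
                      _ = _ := mul_one _
      have h2 : ∑ i, ∑ j, |B s i j - B c i j| ≤ (k:ℝ) * k * ε := by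
        calc ∑ i : Fin k, ∑ j : Fin k, |B s i j - B c i j|
            ≤ ∑ _i : Fin k, ∑ _j : Fin k, ε := by
              refine Finset.sum_le_sum fun i _ => Finset.sum_le_sum fun j _ => ?_
              exact (hclose i j).le
          _ = (k:ℝ) * k * ε := by
              simp [Finset.sum_const, Finset.card_univ]
              ring
      have h3 : ((k:ℝ) * k + 1) * ε = m := by
        rw [hε]
        field_simp
      have h4 : (k:ℝ) * k * ε < m := by nlinarith [hεpos]
      linarith
    have hmain : m ≤ u ⬝ᵥ B c *ᵥ u := hm u hunorm
    have := abs_lt.mp hbound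
    rw [hsplit]
    linarith [this.1]
  have hq_eq : u ⬝ᵥ B s *ᵥ u = ‖x‖⁻¹ * ‖x‖⁻¹ * (x ⬝ᵥ B s *ᵥ x) := by
    rw [hu, Matrix.mulVec_smul, dotProduct_smul, smul_dotProduct]
    simp only [smul_eq_mul]
    ring
  have hfin : 0 < x ⬝ᵥ B s *ᵥ x := by
    rw [hq_eq] at hqu
    have ha : 0 < ‖x‖⁻¹ * ‖x‖⁻¹ := by positivity
    nlinarith [hqu, ha]
  simpa using hfin
end

section
/- Let ξ₀, ζ₁, ζ₂ be unit vectors in ℝⁿ with ζ₁ + ζ₂ = t₀ξ₀, 0 < t₀ < 2. For unit vectors ω near ξ₀, and γ(ω) a continuous unit-vector-valued function with γ(ξ₀) = ζ₁, define c(ω) = ⟨ζ₁, ξ₀⟩·√((1 − ⟨γ(ω), ω⟩²)/(1 − ⟨ζ₁, ξ₀⟩²)) and ω₁(ω) = (γ(ω) − ⟨γ(ω), ω⟩ω + c(ω)ω)/√(1 − ⟨γ(ω), ω⟩² + c(ω)²), ω₂(ω) = 2⟨ω₁(ω), ω⟩ω − ω₁(ω). Then (assuming ⟨ζ₁, ξ₀⟩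 ∈ (0,1) and γ(ω) not parallel to ω) ω₁(ω) and ω₂(ω) are unit vectors satisfying ω₁(ω) + ω₂(ω) = t₀ω, ⟨ω₁(ω), ω⟩ = ⟨ζ₁, ξ₀⟩, and ω₁(ξ₀) = ζ₁, ω₂(ξ₀) = ζ₂. -/
open RealInnerProductSpace

set_option maxHeartbeats 1000000 in
theorem stmt18 (n : ℕ)
    (ξ₀ ζ₁ ζ₂ : EuclideanSpace ℝ (Fin n))
    (hξ₀ : ‖ξ₀‖ = 1) (hζ₁ : ‖ζ₁‖ = 1) (hζ₂ : ‖ζ₂‖ = 1)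
    (t₀ : ℝ) (ht₀ : 0 < t₀) (ht₀' : t₀ < 2) (hsum : ζ₁ + ζ₂ = t₀ • ξ₀)
    (hip : 0 < ⟪ζ₁, ξ₀⟫) (hip' : ⟪ζ₁, ξ₀⟫ < 1)
    (γ : EuclideanSpace ℝ (Fin n) → EuclideanSpace ℝ (Fin n))
    (hγcont : Continuous γ) (hγξ₀ : γ ξ₀ = ζ₁)
    (c : EuclideanSpace ℝ (Fin n) → ℝ)
    (hc : ∀ ω, c ω = ⟪ζ₁, ξ₀⟫ *
      Real.sqrt ((1 - ⟪γ ω, ω⟫ ^ 2) / (1 - ⟪ζ₁, ξ₀⟫ ^ 2)))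
    (ω₁ ω₂ : EuclideanSpace ℝ (Fin n) → EuclideanSpace ℝ (Fin n))
    (hω₁ : ∀ ω, ω₁ ω =
      (Real.sqrt (1 - ⟪γ ω, ω⟫ ^ 2 + c ω ^ 2))⁻¹ •
        (γ ω - ⟪γ ω, ω⟫ • ω + c ω • ω))
    (hω₂ : ∀ ω, ω₂ ω = (2 * ⟪ω₁ ω, ω⟫) • ω - ω₁ ω) :
    (∀ ω, ‖ω‖ = 1 → ‖γ ω‖ = 1 → |⟪γ ω, ω⟫| < 1 →
      ‖ω₁ ω‖ = 1 ∧ ‖ω₂ ω‖ = 1 ∧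
      ω₁ ω + ω₂ ω = t₀ • ω ∧ ⟪ω₁ ω, ω⟫ = ⟪ζ₁, ξ₀⟫) ∧
    ω₁ ξ₀ = ζ₁ ∧ ω₂ ξ₀ = ζ₂ := by
  set s := ⟪ζ₁, ξ₀⟫ with hsdef
  have hs1 : (0:ℝ) < 1 - s ^ 2 := by nlinarith
  -- t₀ = 2s
  have ht2s : t₀ = 2 * s := by
    have hζ₂' : ζ₂ = t₀ • ξ₀ - ζ₁ := by rw [← hsum]; abel
    have h1 : ⟪ζ₂, ζ₂⟫ = 1 := by
      rw [real_inner_self_eq_norm_sq, hζ₂]; ring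
    rw [hζ₂'] at h1
    have hcomm : ⟪ξ₀, ζ₁⟫ = s := real_inner_comm _ _
    simp only [inner_sub_left, inner_sub_right, real_inner_smul_left,
      real_inner_smul_right, real_inner_self_eq_norm_sq, hξ₀, hζ₁, hcomm,
      ← hsdef, norm_smul, Real.norm_eq_abs, mul_one, one_pow, mul_pow,
      sq_abs] at h1
    have h2 : t₀ * (t₀ - 2 * s) = 0 := by nlinarith [h1]
    have h3 := (mul_eq_zero.mp h2).resolve_left ht₀.ne'
    linarith
  constructor
  · intro ω hω hγn ha
    set a := ⟪γ ω, ω⟫ with hadef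
    have ha2 : a ^ 2 < 1 := by
      have := abs_lt.mp ha; nlinarith [this.1, this.2]
    have hA : (0:ℝ) < 1 - a ^ 2 := by linarith
    have hc2 : (c ω) ^ 2 = s ^ 2 * ((1 - a ^ 2) / (1 - s ^ 2)) := by
      rw [hc ω, mul_pow, Real.sq_sqrt (by positivity)]
    have hD : 1 - a ^ 2 + (c ω) ^ 2 = (1 - a ^ 2) / (1 - s ^ 2) := by
      rw [hc2]; field_simp; ring
    have hDpos : (0:ℝ) < 1 - a ^ 2 + (c ω) ^ 2 := by
      rw [hD]; positivity
    have hsD : Real.sqrt (1 - a ^ 2 + (c ω) ^ 2) > 0 := Real.sqrt_pos.mpr hDpos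
    set v := γ ω - a • ω + c ω • ω with hvdef
    have hcomm : ⟪ω, γ ω⟫ = a := real_inner_comm _ _
    have hvv : ⟪v, v⟫ = 1 - a ^ 2 + (c ω) ^ 2 := by
      simp only [hvdef, inner_add_left, inner_add_right, inner_sub_left,
        inner_sub_right, real_inner_smul_left, real_inner_smul_right,
        real_inner_self_eq_norm_sq, hω, hγn, hcomm, ← hadef, norm_smul,
        Real.norm_eq_abs, mul_one, one_pow, mul_pow, sq_abs]
      ring
    have hvnorm : ‖v‖ = Real.sqrt (1 - a ^ 2 + (c ω) ^ 2) := by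
      rw [← hvv, real_inner_self_eq_norm_sq, Real.sqrt_sq (norm_nonneg v)]
    have hn1 : ‖ω₁ ω‖ = 1 := by
      rw [hω₁ ω, norm_smul, ← hadef, ← hvdef, hvnorm, norm_inv,
        Real.norm_eq_abs, abs_of_pos hsD]
      field_simp
    have hvω : ⟪v, ω⟫ = c ω := by
      simp only [hvdef, inner_add_left, inner_sub_left, real_inner_smul_left,
        real_inner_self_eq_norm_sq, hω, ← hadef]
      ring
    have hinner : ⟪ω₁ ω, ω⟫ = s := by
      have hcω : c ω = s * Real.sqrt ((1 - a ^ 2) / (1 - s ^ 2)) := by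
        rw [hc ω]
      have hQ : (0:ℝ) < Real.sqrt ((1 - a ^ 2) / (1 - s ^ 2)) :=
        Real.sqrt_pos.mpr (by positivity)
      rw [hω₁ ω, ← hadef, real_inner_smul_left, ← hvdef, hvω, hD, hcω]
      field_simp
    have h3 : ⟪ω, ω₁ ω⟫ = s := by rw [real_inner_comm]; exact hinner
    refine ⟨hn1, ?_, ?_, hinner⟩
    · have h2 : ⟪ω₂ ω, ω₂ ω⟫ = 1 := by
        rw [hω₂ ω]
        simp only [inner_sub_left, inner_sub_right, real_inner_smul_left,
          real_inner_smul_right, real_inner_self_eq_norm_sq, hω, hn1, hinner,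
          h3, norm_smul, Real.norm_eq_abs, mul_one, one_pow, mul_pow, sq_abs]
        ring
      have h4 : ‖ω₂ ω‖ ^ 2 = 1 := by
        rw [← real_inner_self_eq_norm_sq]; exact h2
      nlinarith [norm_nonneg (ω₂ ω), h4]
    · rw [hω₂ ω, hinner, ht2s]
      abel
  · have aξ : ⟪γ ξ₀, ξ₀⟫ = s := by rw [hγξ₀]
    have cξ : c ξ₀ = s := by
      rw [hc ξ₀, aξ, div_self hs1.ne', Real.sqrt_one, mul_one]
    have h1 : ω₁ ξ₀ = ζ₁ := by
      rw [hω₁ ξ₀, aξ, cξ, hγξ₀]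
      have h5 : 1 - s ^ 2 + s ^ 2 = 1 := by ring
      rw [h5, Real.sqrt_one, inv_one, one_smul]
      abel
    refine ⟨h1, ?_⟩
    rw [hω₂ ξ₀, h1, ← hsdef, ← ht2s, ← hsum]
    abel
end
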